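/- Let s and t be integers with t ≥ s. (a) If s ≥ 4 and at least one of s and t is even, then there exist a constant c > 0 and a natural number n₀ such that for all n ≥ n₀, c·n² ≤ r(K_{n,n}, K_{s,t}, st - ⌊(s+t)/2⌋ + 3) ≤ n². (b) If s ≥ 5 and both s and t are odd, then there exist a constant c > 0 and a natural number n₀ such that for all n ≥ n₀, c·n² ≤ r(K_{n,n}, K_{s,t}, st - ⌊(s+t)/2⌋ + 4) ≤ n². -/

import Mathlib

/-!
Let `c` colour `K_{n,n}` so that every `t × s` subgrid has at least `ts - p + 1` colours, i.e.
fewer than `p` of its cells repeat a colour already present in it. Then no colour occurs more than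
`p` times in a column, so each column sees at least `n / p` colours.

If some colour class has at least `2p + s` cells, then for any two columns `x ≠ y` at least `s - 2`
of them lie outside `x` and `y`. Together with `p + 3 - s` colours common to `x` and `y` they would
fit into a `t × s` subgrid with `p` repeated cells, so any two columns share at most `p + 2 - s`
colours. A Cauchy–Schwarz count over the colours then gives `n² ≤ p (1 + p (p + 2 - s)) · #colours`.
Otherwise every colour class has fewer than `2p + s` cells and there are at least `n² / (2p + s)`
colours. The theorem is the case `p = ⌊(s+t)/2⌋ - 2`, resp. `p = ⌊(s+t)/2⌋ - 3`.
-/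

open Finset

/-- `rBip n s t q` is the bipartite Erdős–Gyárfás function `r(K_{n,n}, K_{s,t}, q)`:
the minimum number of colors in an edge-coloring of `K_{n,n}` such that every copy of
`K_{s,t}` (with its part of size `s` in either side of the bipartition) receives at
least `q` distinct colors on its edges. -/
noncomputable def rBip (n s t q : ℕ) : ℕ :=
  sInf {k : ℕ | ∃ c : Fin n → Fin n → ℕ,
    (∀ a b, c a b < k) ∧
    ∀ A B : Finset (Fin n),
      (A.card = s ∧ B.card = t) ∨ (A.card = t ∧ B.card = s) →
      q ≤ ((A ×ˢ B).image fun p => c p.1 p.2).card}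

section

variable {ι κ : Type*} [DecidableEq κ]

theorem card_image_add_card_le_of_forall_exists [DecidableEq ι] {f : ι → κ} {E D : Finset ι}
    (hDE : D ⊆ E) (h : ∀ z ∈ D, ∃ z' ∈ E \ D, f z' = f z) : #(E.image f) + #D ≤ #E := by
  have hsub : E.image f ⊆ (E \ D).image f := by
    intro γ hγ
    obtain ⟨z, hz, rfl⟩ := mem_image.mp hγ
    by_cases hzD : z ∈ D
    · obtain ⟨z', hz', hfz⟩ := h z hzD
      exact mem_image.mpr ⟨z', hz', hfz⟩
    · exact mem_image_of_mem f (mem_sdiff.mpr ⟨hz, hzD⟩)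
  have := (card_le_card hsub).trans card_image_le
  rw [card_sdiff_of_subset hDE] at this
  have := card_le_card hDE
  omega

theorem sq_sum_card_le_card_mul_sum_sum_card_inter [Fintype ι] {S : Finset κ}
    {C : ι → Finset κ} (hC : ∀ x, C x ⊆ S) :
    (∑ x, #(C x)) ^ 2 ≤ #S * ∑ x, ∑ y, #(C x ∩ C y) := by
  classical
  let e : ι → κ → ℕ := fun x γ => if γ ∈ C x then 1 else 0
  have hcard : ∀ x, #(C x) = ∑ γ ∈ S, e x γ := fun x => by
    rw [← card_filter, filter_mem_eq_inter, inter_eq_right.mpr (hC x)]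
  have hinter : ∀ x y, #(C x ∩ C y) = ∑ γ ∈ S, e x γ * e y γ := fun x y => by
    have : C x ∩ C y = {γ ∈ S | γ ∈ C x ∧ γ ∈ C y} := by
      ext γ; simpa using fun h _ => hC x h
    rw [this, card_filter]
    exact sum_congr rfl fun γ _ => by simp only [e, ite_zero_mul_ite_zero, one_mul, ite_and]
  calc (∑ x, #(C x)) ^ 2 = (∑ γ ∈ S, ∑ x, e x γ) ^ 2 := by
        simp_rw [hcard]; rw [sum_comm]
    _ ≤ #S * ∑ γ ∈ S, (∑ x, e x γ) ^ 2 := sq_sum_le_card_mul_sum_sq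
    _ = #S * ∑ x, ∑ y, #(C x ∩ C y) := by
        simp_rw [hinter, sq, sum_mul_sum]
        rw [sum_comm]; simp_rw [sum_comm (s := S)]

theorem sq_card_le_of_card_inter_le [Fintype ι] {S : Finset κ} {C : ι → Finset κ} {p m : ℕ}
    (hC : ∀ x, C x ⊆ S) (hsize : ∀ x, Fintype.card ι ≤ p * #(C x))
    (hinter : ∀ x y, x ≠ y → #(C x ∩ C y) ≤ m) :
    Fintype.card ι ^ 2 ≤ p * (1 + p * m) * #S := by
  classical
  set n := Fintype.card ι
  set N := ∑ x, #(C x)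
  have hN : n ^ 2 ≤ p * N := by
    calc n ^ 2 = ∑ _x : ι, n := by simp [sq, n]
      _ ≤ ∑ x, p * #(C x) := sum_le_sum fun x _ => hsize x
      _ = p * N := (mul_sum ..).symm
  have hpairs : ∑ x, ∑ y, #(C x ∩ C y) ≤ N + n ^ 2 * m := by
    calc ∑ x, ∑ y, #(C x ∩ C y) ≤ ∑ x, ∑ y, ((if x = y then #(C x) else 0) + m) := by
          gcongr with x _ y _
          split_ifs with h
          · simp [h]
          · simpa using hinter x y h
      _ = N + n ^ 2 * m := by simp [sum_add_distrib, sq, N, n, mul_assoc]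
  have hCS := sq_sum_card_le_card_mul_sum_sum_card_inter hC
  have hNN : N * N ≤ (#S * (1 + p * m)) * N := by
    calc N * N = N ^ 2 := (sq N).symm
      _ ≤ #S * (N + n ^ 2 * m) := hCS.trans (Nat.mul_le_mul_left _ hpairs)
      _ ≤ #S * (N + p * N * m) := by gcongr
      _ = (#S * (1 + p * m)) * N := by ring
  have hNK : N ≤ #S * (1 + p * m) := by
    rcases Nat.eq_zero_or_pos N with hN0 | hNpos
    · simp [hN0]
    · exact Nat.le_of_mul_le_mul_right hNN hNpos
  calc n ^ 2 ≤ p * N := hN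
    _ ≤ p * (#S * (1 + p * m)) := Nat.mul_le_mul_left _ hNK
    _ = p * (1 + p * m) * #S := by ring

end

section

variable {κ α β : Type*} [DecidableEq κ]

/-- Every `t × s` subgrid has fewer than `p` more cells than colours; for `p ≤ t * s` this says
that it receives at least `t * s - p + 1` colours. -/
def FewRepeats (c : α → β → κ) (t s p : ℕ) : Prop :=
  ∀ (A : Finset α) (B : Finset β), #A = t → #B = s →
    t * s < #((A ×ˢ B).image fun z => c z.1 z.2) + p

variable [Fintype α]

def columnColors (c : α → β → κ) (y : β) : Finset κ :=
  univ.image (c · y)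

theorem apply_invFun_of_mem_columnColors [Nonempty α] {c : α → β → κ} {y : β} {γ : κ}
    (h : γ ∈ columnColors c y) : c (Function.invFun (c · y) γ) y = γ :=
  Function.invFun_eq (f := (c · y)) (by simpa [columnColors] using h)

variable [Fintype β] [DecidableEq α] [DecidableEq β] {t s p : ℕ}

namespace FewRepeats

variable {c : α → β → κ}

theorem card_lt_of_forall_exists (hc : FewRepeats c t s p) (ht : t ≤ Fintype.card α)
    (hs : s ≤ Fintype.card β) {R : Finset α} {S : Finset β} (hR : #R ≤ t) (hS : #S ≤ s)
    {D : Finset (α × β)} (hD : D ⊆ R ×ˢ S)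
    (hwit : ∀ z ∈ D, ∃ z' ∈ R ×ˢ S \ D, c z'.1 z'.2 = c z.1 z.2) : #D < p := by
  obtain ⟨A, hRA, hA⟩ := exists_superset_card_eq hR (by simpa using ht)
  obtain ⟨B, hSB, hB⟩ := exists_superset_card_eq hS (by simpa using hs)
  have hsub : R ×ˢ S ⊆ A ×ˢ B := product_subset_product hRA hSB
  have hdel := card_image_add_card_le_of_forall_exists (f := fun z => c z.1 z.2)
    (hD.trans hsub) fun z hz => by
      obtain ⟨z', hz', hcz⟩ := hwit z hz
      exact ⟨z', sdiff_subset_sdiff hsub subset_rfl hz', hcz⟩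
  have := hc A B hA hB
  rw [card_product, hA, hB] at hdel
  omega

theorem card_filter_column_le (hc : FewRepeats c t s p) (ht : t ≤ Fintype.card α)
    (hs : s ≤ Fintype.card β) (hs₀ : 0 < s) (hpt : p < t) (y : β) (γ : κ) :
    #{a | c a y = γ} ≤ p := by
  by_contra! h
  obtain ⟨T, hT, hTcard⟩ := exists_subset_card_eq h
  obtain ⟨a₀, ha₀⟩ : T.Nonempty := card_pos.mp (by omega)
  have hγ : ∀ a ∈ T, c a y = γ := fun a ha => (mem_filter.mp (hT ha)).2
  have := hc.card_lt_of_forall_exists ht hs (R := T) (S := {y}) (D := T.erase a₀ ×ˢ {y})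
    (by omega) (by rw [card_singleton]; exact hs₀)
    (product_subset_product (erase_subset _ _) subset_rfl)
    fun z hz => ⟨(a₀, y), by simp [ha₀], by
      obtain ⟨hz₁, hz₂⟩ := mem_product.mp hz
      rw [mem_singleton.mp hz₂, hγ a₀ ha₀, hγ z.1 (mem_of_mem_erase hz₁)]⟩
  rw [card_product, card_erase_of_mem ha₀, card_singleton, mul_one] at this
  omega

theorem card_le_mul_card_columnColors (hc : FewRepeats c t s p) (ht : t ≤ Fintype.card α)
    (hs : s ≤ Fintype.card β) (hs₀ : 0 < s) (hpt : p < t) (y : β) :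
    Fintype.card α ≤ p * #(columnColors c y) :=
  card_le_mul_card_image univ p fun γ _ => hc.card_filter_column_le ht hs hs₀ hpt y γ

theorem card_filter_le_card_filter_ne_ne_add (hc : FewRepeats c t s p)
    (ht : t ≤ Fintype.card α) (hs : s ≤ Fintype.card β) (hs₀ : 0 < s) (hpt : p < t)
    (γ : κ) (x y : β) :
    #{z : α × β | c z.1 z.2 = γ} ≤
      #{z : α × β | c z.1 z.2 = γ ∧ z.2 ≠ x ∧ z.2 ≠ y} + 2 * p := by
  have hsplit : ({z : α × β | c z.1 z.2 = γ} : Finset _) ⊆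
      ({z : α × β | c z.1 z.2 = γ ∧ z.2 ≠ x ∧ z.2 ≠ y} : Finset _) ∪
        (({a | c a x = γ} : Finset α) ×ˢ {x} ∪ ({a | c a y = γ} : Finset α) ×ˢ {y}) := by
    rintro ⟨a, b⟩ h
    simp only [mem_filter, mem_univ, true_and] at h
    by_cases hx : b = x
    · subst hx; simp [h]
    by_cases hy : b = y
    · subst hy; simp [h]
    simp [h, hx, hy]
  grw [card_le_card hsplit, card_union_le, card_union_le, card_product, card_product,
    hc.card_filter_column_le ht hs hs₀ hpt x γ, hc.card_filter_column_le ht hs hs₀ hpt y γ]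
  simp only [card_singleton, mul_one]
  omega

theorem card_add_card_le (hc : FewRepeats c t s p) (ht : t ≤ Fintype.card α)
    (hs : s ≤ Fintype.card β) {x y : β} (hxy : x ≠ y) {γ₀ : κ} {F : Finset (α × β)}
    (hF : F.Nonempty) (hFγ : ∀ z ∈ F, c z.1 z.2 = γ₀ ∧ z.2 ≠ x ∧ z.2 ≠ y) {Γ : Finset κ}
    {fx fy : κ → α} (hx : ∀ γ ∈ Γ, c (fx γ) x = γ) (hy : ∀ γ ∈ Γ, c (fy γ) y = γ)
    (hrows : #F + 2 * #Γ ≤ t) (hcols : #F + 2 ≤ s) : #F + #Γ ≤ p := by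
  obtain ⟨z₀, hz₀⟩ := hF
  set X := Γ.image fun γ => (fx γ, x)
  have hX : #X = #Γ := card_image_of_injOn fun γ hγ γ' hγ' h => by
    rw [← hx γ hγ, ← hx γ' hγ', (Prod.mk.inj h).1]
  have hFX : Disjoint (F.erase z₀) X := disjoint_left.mpr fun z hzF hzX => by
    obtain ⟨γ, -, rfl⟩ := mem_image.mp hzX
    exact (hFγ _ (mem_of_mem_erase hzF)).2.1 rfl
  -- `z₀` keeps the colour of the deleted cells of `F`, and `(fy γ, y)` that of `(fx γ, x)`.
  have hD := hc.card_lt_of_forall_exists ht hs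
    (R := F.image Prod.fst ∪ Γ.image fx ∪ Γ.image fy) (S := F.image Prod.snd ∪ {x, y})
    (D := F.erase z₀ ∪ X) ?_ ?_ ?_ ?_
  · rw [card_union_of_disjoint hFX, card_erase_of_mem hz₀, hX] at hD
    have := card_pos.mpr ⟨z₀, hz₀⟩
    omega
  · grw [card_union_le, card_union_le, card_image_le, card_image_le, card_image_le]
    omega
  · grw [card_union_le, card_image_le, card_insert_le, card_singleton]
    omega
  · intro z hz
    simp only [X, mem_union, mem_erase, mem_image] at hz
    rcases hz with ⟨-, hzF⟩ | ⟨γ, hγ, rfl⟩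
    · simp only [mem_product, mem_union, mem_image]
      exact ⟨.inl (.inl ⟨z, hzF, rfl⟩), .inl ⟨z, hzF, rfl⟩⟩
    · simp only [mem_product, mem_union, mem_image, mem_insert, mem_singleton]
      exact ⟨.inl (.inr ⟨γ, hγ, rfl⟩), by simp⟩
  · intro z hz
    simp only [X, mem_union, mem_erase, mem_image] at hz
    rcases hz with ⟨-, hzF⟩ | ⟨γ, hγ, rfl⟩
    · refine ⟨z₀, ?_, by rw [(hFγ z₀ hz₀).1, (hFγ z hzF).1]⟩
      have := hFγ z₀ hz₀
      simp only [X, mem_sdiff, mem_product, mem_union, mem_image, mem_erase]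
      aesop
    · refine ⟨(fy γ, y), ?_, by rw [hx γ hγ, hy γ hγ]⟩
      have hyF : (fy γ, y) ∉ F := fun h => (hFγ _ h).2.2 rfl
      simp only [X, mem_sdiff, mem_product, mem_union, mem_image, mem_erase]
      aesop

theorem card_columnColors_inter_le (hc : FewRepeats c t s p) (ht : t ≤ Fintype.card α)
    (hs : s ≤ Fintype.card β) (hs₃ : 3 ≤ s) (hpt : p < t) (hsp : s ≤ p + 3)
    (hrows : 2 * p + 4 ≤ s + t) {γ₀ : κ} (hγ₀ : 2 * p + s ≤ #{z : α × β | c z.1 z.2 = γ₀})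
    {x y : β} (hxy : x ≠ y) : #(columnColors c x ∩ columnColors c y) ≤ p + 2 - s := by
  by_contra! h
  obtain ⟨Γ, hΓ, hΓcard⟩ := exists_subset_card_eq
    (show p + 3 - s ≤ #(columnColors c x ∩ columnColors c y) by omega)
  have hout := hc.card_filter_le_card_filter_ne_ne_add ht hs (by omega) hpt γ₀ x y
  obtain ⟨F, hF, hFcard⟩ := exists_subset_card_eq
    (show s - 2 ≤ #{z : α × β | c z.1 z.2 = γ₀ ∧ z.2 ≠ x ∧ z.2 ≠ y} by omega)
  have : Nonempty α := Fintype.card_pos_iff.mp (by omega)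
  have := hc.card_add_card_le ht hs hxy (F := F) (card_pos.mp (by omega))
    (fun z hz => by simpa using hF hz)
    (fun γ hγ => apply_invFun_of_mem_columnColors (mem_inter.mp (hΓ hγ)).1)
    (fun γ hγ => apply_invFun_of_mem_columnColors (mem_inter.mp (hΓ hγ)).2)
    (by omega) (by omega)
  omega

end FewRepeats

theorem FewRepeats.sq_card_le {c : α → α → κ} {S : Finset κ}
    (hcS : ∀ a b, c a b ∈ S) (hc : FewRepeats c t s p) (ht : t ≤ Fintype.card α)
    (hs : s ≤ Fintype.card α) (hs₃ : 3 ≤ s) (hpt : p < t) (hsp : s ≤ p + 3)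
    (hrows : 2 * p + 4 ≤ s + t) :
    Fintype.card α ^ 2 ≤ (2 * p + s + p * (1 + p * (p + 2 - s))) * #S := by
  by_cases hbig : ∃ γ₀, 2 * p + s ≤ #{z : α × α | c z.1 z.2 = γ₀}
  · obtain ⟨γ₀, hγ₀⟩ := hbig
    have := sq_card_le_of_card_inter_le (C := columnColors c)
      (fun y => image_subset_iff.mpr fun a _ => hcS a y)
      (hc.card_le_mul_card_columnColors ht hs (by omega) hpt)
      fun x y => hc.card_columnColors_inter_le ht hs hs₃ hpt hsp hrows hγ₀
    exact this.trans (Nat.mul_le_mul_right _ (Nat.le_add_left _ _))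
  · push Not at hbig
    have := card_le_mul_card_image_of_maps_to (s := univ) (f := fun z : α × α => c z.1 z.2)
      (fun z _ => hcS z.1 z.2) (2 * p + s) fun γ _ => (hbig γ).le
    rw [card_univ, Fintype.card_prod, ← sq] at this
    exact this.trans (Nat.mul_le_mul_right _ (Nat.le_add_right _ _))

end

theorem exists_coloring_sq (n : ℕ) {s t q : ℕ} (hq : q ≤ s * t) :
    ∃ c : Fin n → Fin n → ℕ, (∀ a b, c a b < n ^ 2) ∧
      ∀ A B : Finset (Fin n), (#A = s ∧ #B = t) ∨ (#A = t ∧ #B = s) →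
        q ≤ #((A ×ˢ B).image fun z => c z.1 z.2) := by
  refine ⟨fun a b => finProdFinEquiv (a, b), fun a b => by rw [sq]; exact Fin.isLt _,
    fun A B hAB => ?_⟩
  rw [card_image_of_injective _ fun z w h => finProdFinEquiv.injective (Fin.val_injective h),
    card_product]
  rcases hAB with ⟨hA, hB⟩ | ⟨hA, hB⟩ <;> simp [hA, hB, mul_comm, hq]

theorem rBip_le_sq {n s t q : ℕ} (hq : q ≤ s * t) : rBip n s t q ≤ n ^ 2 :=
  Nat.sInf_le (exists_coloring_sq n hq)

theorem exists_coloring_lt_rBip {n s t q : ℕ} (hq : q ≤ s * t) :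
    ∃ c : Fin n → Fin n → ℕ, (∀ a b, c a b < rBip n s t q) ∧
      ∀ A B : Finset (Fin n), (#A = s ∧ #B = t) ∨ (#A = t ∧ #B = s) →
        q ≤ #((A ×ˢ B).image fun z => c z.1 z.2) :=
  Nat.sInf_mem (s := {k | ∃ c : Fin n → Fin n → ℕ, (∀ a b, c a b < k) ∧ _})
    ⟨n ^ 2, exists_coloring_sq n hq⟩

theorem sq_le_mul_rBip {n s t p : ℕ} (hp : 0 < p) (hs₃ : 3 ≤ s) (hpt : p < t)
    (hsp : s ≤ p + 3) (hrows : 2 * p + 4 ≤ s + t) (hsn : s ≤ n) (htn : t ≤ n) :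
    n ^ 2 ≤ (2 * p + s + p * (1 + p * (p + 2 - s))) * rBip n s t (s * t - p + 1) := by
  have : t ≤ s * t := Nat.le_mul_of_pos_left t (by omega)
  obtain ⟨c, hck, hc⟩ := exists_coloring_lt_rBip (n := n) (show s * t - p + 1 ≤ s * t by omega)
  have hfew : FewRepeats c t s p := fun A B hA hB => by
    have := hc A B (Or.inr ⟨hA, hB⟩)
    rw [mul_comm]
    omega
  simpa using hfew.sq_card_le (S := range (rBip n s t (s * t - p + 1)))
    (fun a b => mem_range.mpr (hck a b)) (by simpa using htn) (by simpa using hsn)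
    hs₃ hpt hsp hrows

theorem exists_pos_mul_sq_le_rBip_and_rBip_le_sq {s t p : ℕ} (hp : 0 < p) (hs₃ : 3 ≤ s)
    (hpt : p < t) (hsp : s ≤ p + 3) (hrows : 2 * p + 4 ≤ s + t) :
    ∃ c : ℝ, 0 < c ∧ ∃ n₀ : ℕ, ∀ n : ℕ, n₀ ≤ n →
      c * (n : ℝ) ^ 2 ≤ (rBip n s t (s * t - p + 1) : ℝ) ∧
      (rBip n s t (s * t - p + 1) : ℝ) ≤ (n : ℝ) ^ 2 := by
  set C := 2 * p + s + p * (1 + p * (p + 2 - s))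
  have hC : (0 : ℝ) < C := by positivity
  refine ⟨1 / C, by positivity, s + t, fun n hn => ⟨?_, ?_⟩⟩
  · have := sq_le_mul_rBip (n := n) hp hs₃ hpt hsp hrows (by omega) (by omega)
    rw [div_mul_eq_mul_div, one_mul, div_le_iff₀ hC, mul_comm]
    exact_mod_cast this
  · have : t ≤ s * t := Nat.le_mul_of_pos_left t (by omega)
    exact_mod_cast rBip_le_sq (n := n) (show s * t - p + 1 ≤ s * t by omega)

/-- For `t ≥ s`: (a) if `s ≥ 4` and at least one of `s, t` is even, then
`r(K_{n,n}, K_{s,t}, st - ⌊(s+t)/2⌋ + 3) = Θ(n²)`; (b) if `s ≥ 5` and both `s` and `t`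
are odd, then `r(K_{n,n}, K_{s,t}, st - ⌊(s+t)/2⌋ + 4) = Θ(n²)`. -/
theorem stmt_6 (s t : ℕ) (hst : s ≤ t) :
    (4 ≤ s → (Even s ∨ Even t) →
      ∃ c : ℝ, 0 < c ∧ ∃ n₀ : ℕ, ∀ n : ℕ, n₀ ≤ n →
        c * (n : ℝ) ^ 2 ≤ (rBip n s t (s * t - (s + t) / 2 + 3) : ℝ) ∧
        (rBip n s t (s * t - (s + t) / 2 + 3) : ℝ) ≤ (n : ℝ) ^ 2) ∧
    (5 ≤ s → Odd s → Odd t →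
      ∃ c : ℝ, 0 < c ∧ ∃ n₀ : ℕ, ∀ n : ℕ, n₀ ≤ n →
        c * (n : ℝ) ^ 2 ≤ (rBip n s t (s * t - (s + t) / 2 + 4) : ℝ) ∧
        (rBip n s t (s * t - (s + t) / 2 + 4) : ℝ) ≤ (n : ℝ) ^ 2) := by
  refine ⟨fun hs _ => ?_, fun hs _ _ => ?_⟩ <;>
    have : t ≤ s * t := Nat.le_mul_of_pos_left t (by omega)
  · rw [show s * t - (s + t) / 2 + 3 = s * t - ((s + t) / 2 - 2) + 1 by omega]
    exact exists_pos_mul_sq_le_rBip_and_rBip_le_sq (by omega) (by omega) (by omega) (by omega)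
      (by omega)
  · rw [show s * t - (s + t) / 2 + 4 = s * t - ((s + t) / 2 - 3) + 1 by omega]
    exact exists_pos_mul_sq_le_rBip_and_rBip_le_sq (by omega) (by omega) (by omega) (by omega)
      (by omega)
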